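/- Let p be a prime and let v = (a, b) ∈ ℤ[1/p]² be primitive over ℤ[1/p] with |b|_p ≥ |a|_p (so b ≠ 0). Then there exists a unique pair (x, y) ∈ ℤ[1/p]² such that: (i) b·y + a·x = 1 (equivalently, the matrix with columns v^⊥ = (b, −a) and w = (x, y) lies in SL₂(ℤ[1/p])); (ii) the real number (b·x − a·y)/(a² + b²) lies in [−1/2, 1/2); and (iii) the p-adic number x/b lies in ℤ_p. In particular, primitive vectors v of ℤ[1/p]² with |b|_p ≥ |a|_p are in bijection with matrices γ_v = (v^⊥ | w) ∈ SL₂(ℤ[1/p]) whose real Iwasawa N-coordinate lies in [−1/2, 1/2) and whose p-adic Bruhat N-coordinate lies in ℤ_p. -/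

import Mathlib

/-!
The solutions of `a * x + b * y = 1` in `ℤ[1/p]²` are the points `(x₀ + t * b, y₀ - t * a)`,
`t ∈ ℤ[1/p]`, of a line through one solution `(x₀, y₀)`; along it the real `N`-coordinate is
`c + t` and the `p`-adic one is `x₀ / b + t`. So it suffices that for `r ∈ ℚ_p` and `c ∈ ℝ`
exactly one `t ∈ ℤ[1/p]` has `r + t ∈ ℤ_p` and `c + t ∈ [-1/2, 1/2)`: existence because
`ℚ_p = ℤ[1/p] + ℤ_p` (density of `ℤ` in `ℤ_p`) followed by an integer shift, uniqueness
because `ℤ[1/p] ∩ ℤ_p = ℤ`.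
-/

/-- A rational number lies in `ℤ[1/p]`, i.e. has the form `m / p^n` with `m ∈ ℤ`, `n ∈ ℕ`. -/
def InZInvP (p : ℕ) (q : ℚ) : Prop := ∃ (m : ℤ) (n : ℕ), q = (m : ℚ) / (p : ℚ) ^ n

/-- A vector `v ∈ ℤ[1/p]²` is primitive over `ℤ[1/p]`: the gcd equation
`v₁·x + v₂·y = 1` has a solution with `x, y ∈ ℤ[1/p]`. -/
def IsPrimitiveZInvP (p : ℕ) (v : ℚ × ℚ) : Prop :=
  ∃ x y : ℚ, InZInvP p x ∧ InZInvP p y ∧ v.1 * x + v.2 * y = 1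

section ZInvP

variable (p : ℕ) [NeZero p]

def zInvP : Subring ℚ where
  carrier := {q | InZInvP p q}
  one_mem' := ⟨1, 0, by simp⟩
  zero_mem' := ⟨0, 0, by simp⟩
  neg_mem' := by
    rintro _ ⟨m, n, rfl⟩
    exact ⟨-m, n, by push_cast; ring⟩
  add_mem' := by
    rintro _ _ ⟨m₁, n₁, rfl⟩ ⟨m₂, n₂, rfl⟩
    have hp : (p : ℚ) ≠ 0 := NeZero.ne _
    refine ⟨m₁ * p ^ n₂ + m₂ * p ^ n₁, n₁ + n₂, ?_⟩
    push_cast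
    field_simp
    ring
  mul_mem' := by
    rintro _ _ ⟨m₁, n₁, rfl⟩ ⟨m₂, n₂, rfl⟩
    exact ⟨m₁ * m₂, n₁ + n₂, by push_cast; ring⟩

variable {p}

@[simp]
theorem mem_zInvP {q : ℚ} : q ∈ zInvP p ↔ InZInvP p q := Iff.rfl

theorem intCast_div_pow_mem_zInvP (m : ℤ) (n : ℕ) : (m : ℚ) / (p : ℚ) ^ n ∈ zInvP p :=
  ⟨m, n, rfl⟩

end ZInvP

section Padic

variable {p : ℕ} [Fact p.Prime]

theorem exists_mem_zInvP_norm_add_le_one (x : ℚ_[p]) :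
    ∃ s ∈ zInvP p, ‖x + (s : ℚ_[p])‖ ≤ 1 := by
  have hp : (1 : ℝ) < p := by exact_mod_cast (Fact.out : p.Prime).one_lt
  obtain ⟨n, hn⟩ := pow_unbounded_of_one_lt ‖x‖ hp
  have hpow : ((p : ℝ) ^ n)⁻¹ = (p : ℝ) ^ (-n : ℤ) := by simp
  have hz : ‖(p : ℚ_[p]) ^ n * x‖ ≤ 1 := by
    rw [norm_mul, Padic.norm_p_pow, ← hpow, inv_mul_le_one₀ (by positivity)]
    exact hn.le
  set z : ℤ_[p] := ⟨_, hz⟩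
  obtain ⟨m, hm⟩ := PadicInt.denseRange_intCast.exists_dist_lt z
    (ε := (p : ℝ) ^ (-n : ℤ)) (by positivity)
  rw [dist_eq_norm, PadicInt.norm_def] at hm
  refine ⟨-(m / (p : ℚ) ^ n), neg_mem (intCast_div_pow_mem_zInvP m n), ?_⟩
  have hpn : (p : ℚ_[p]) ^ n ≠ 0 := pow_ne_zero _ (NeZero.ne _)
  have : x + ((-(m / (p : ℚ) ^ n) : ℚ) : ℚ_[p]) = ((p : ℚ_[p]) ^ n * x - m) / (p : ℚ_[p]) ^ n := by
    push_cast
    field_simp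
    ring
  rw [this, norm_div, Padic.norm_p_pow, div_le_one (by positivity)]
  simpa using hm.le

theorem exists_intCast_eq_of_mem_zInvP_of_norm_le_one {q : ℚ} (hq : q ∈ zInvP p)
    (hnorm : ‖(q : ℚ_[p])‖ ≤ 1) : ∃ k : ℤ, q = k := by
  obtain ⟨m, n, rfl⟩ := hq
  have hpn : (p : ℚ) ^ n ≠ 0 := pow_ne_zero _ (NeZero.ne _)
  have hdvd : (p ^ n : ℤ) ∣ m := by
    rw [← Padic.norm_int_le_pow_iff_dvd, ← Padic.norm_p_pow]
    have : (m : ℚ_[p]) = ((m / (p : ℚ) ^ n : ℚ) : ℚ_[p]) * (p : ℚ_[p]) ^ n := by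
      push_cast
      exact (div_mul_cancel₀ _ (pow_ne_zero _ (NeZero.ne _))).symm
    rw [this, norm_mul]
    exact mul_le_of_le_one_left (norm_nonneg _) hnorm
  obtain ⟨k, rfl⟩ := hdvd
  exact ⟨k, by push_cast; field_simp⟩

theorem existsUnique_mem_zInvP_norm_add_le_one_add_mem_Ico (r : ℚ_[p]) (c : ℝ) :
    ∃! t : ℚ, t ∈ zInvP p ∧ ‖r + (t : ℚ_[p])‖ ≤ 1 ∧ c + t ∈ Set.Ico (-(1 / 2) : ℝ) (1 / 2) := by
  obtain ⟨s, hs, hrs⟩ := exists_mem_zInvP_norm_add_le_one r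
  obtain ⟨m, hm, -⟩ := existsUnique_add_zsmul_mem_Ico zero_lt_one (c + s) (-(1 / 2))
  rw [show (-(1 / 2) : ℝ) + 1 = 1 / 2 by norm_num, zsmul_one] at hm
  have hnorm : ‖r + ((s + m : ℚ) : ℚ_[p])‖ ≤ 1 := by
    rw [Rat.cast_add, ← add_assoc, Rat.cast_intCast]
    exact (Padic.nonarchimedean _ _).trans (max_le hrs (Padic.norm_int_le_one m))
  refine ⟨s + m, ⟨add_mem hs (intCast_mem _ m), hnorm, by simpa [add_assoc] using hm⟩, ?_⟩
  rintro t ⟨ht, hrt, hct⟩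
  have hdiff : ‖((t - (s + m) : ℚ) : ℚ_[p])‖ ≤ 1 := by
    rw [Rat.cast_sub, ← add_sub_add_left_eq_sub _ _ r, sub_eq_add_neg]
    exact (Padic.nonarchimedean _ _).trans (max_le hrt (by rwa [norm_neg]))
  obtain ⟨k, hk⟩ := exists_intCast_eq_of_mem_zInvP_of_norm_le_one
    (sub_mem ht (add_mem hs (intCast_mem _ m))) hdiff
  have hkR : (k : ℝ) = (c + t) - (c + s + m) := by
    rw [← Rat.cast_intCast, ← hk]
    push_cast
    ring
  have hk0 : k = 0 := by
    have h₁ : (-1 : ℤ) < k := by exact_mod_cast (by linarith [hct.1, hm.2] : (-1 : ℝ) < k)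
    have h₂ : k < 1 := by exact_mod_cast (by linarith [hct.2, hm.1] : (k : ℝ) < 1)
    omega
  rw [sub_eq_iff_eq_add, hk0] at hk
  simpa using hk

end Padic

theorem Subring.exists_mem_eq_of_mul_add_mul_eq_one {K : Type*} [Field K] {S : Subring K}
    {a b x₀ y₀ x y : K} (hb : b ≠ 0) (hx₀ : x₀ ∈ S) (hy₀ : y₀ ∈ S) (hx : x ∈ S) (hy : y ∈ S)
    (h₀ : a * x₀ + b * y₀ = 1) (h : a * x + b * y = 1) :
    ∃ t ∈ S, x = x₀ + t * b ∧ y = y₀ - t * a := by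
  have hxt : (x - x₀) / b = y₀ * (x - x₀) - x₀ * (y - y₀) := by
    rw [div_eq_iff hb]
    linear_combination x₀ * h - x * h₀
  refine ⟨(x - x₀) / b, hxt ▸ sub_mem (mul_mem hy₀ (sub_mem hx hx₀)) (mul_mem hx₀ (sub_mem hy hy₀)),
    by field_simp; ring, ?_⟩
  field_simp
  linear_combination h - h₀

/-- **Unique matrix completion of a primitive `ℤ[1/p]²` vector with prescribed Iwasawa
and Bruhat `N`-coordinates:** if `v = (a, b) ∈ ℤ[1/p]²` is primitive with
`|b|_p ≥ |a|_p` (so `b ≠ 0`), then there is a unique `(x, y) ∈ ℤ[1/p]²` such that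
(i) `b·y + a·x = 1` (so `(v^⊥ | (x,y)) ∈ SL₂(ℤ[1/p])` with `v^⊥ = (b, −a)`);
(ii) the real Iwasawa `N`-coordinate `(b·x − a·y)/(a² + b²)` lies in `[−1/2, 1/2)`;
(iii) the `p`-adic Bruhat `N`-coordinate `x/b` lies in `ℤ_p`. -/
theorem exists_unique_completion_of_primitive_vector
    (p : ℕ) [Fact p.Prime] (a b : ℚ)
    (ha : InZInvP p a) (hb : InZInvP p b)
    (hprim : IsPrimitiveZInvP p (a, b))
    (hnorm : ‖(a : ℚ_[p])‖ ≤ ‖(b : ℚ_[p])‖) :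
    ∃! w : ℚ × ℚ, InZInvP p w.1 ∧ InZInvP p w.2 ∧
      b * w.2 + a * w.1 = 1 ∧
      ((b * w.1 - a * w.2 : ℚ) : ℝ) / ((a : ℝ)^2 + (b : ℝ)^2) ∈
        Set.Ico (-(1/2) : ℝ) (1/2) ∧
      ‖(w.1 : ℚ_[p]) / (b : ℚ_[p])‖ ≤ 1 := by
  obtain ⟨x₀, y₀, hx₀, hy₀, h₀⟩ := hprim
  simp only [← mem_zInvP] at ha hb hx₀ hy₀ ⊢
  have hb0 : b ≠ 0 := by
    rintro rfl
    simp only [Rat.cast_zero, norm_zero, norm_le_zero_iff, Rat.cast_eq_zero] at hnorm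
    simp [hnorm] at h₀
  set c : ℝ := ((b * x₀ - a * y₀ : ℚ) : ℝ) / ((a : ℝ) ^ 2 + (b : ℝ) ^ 2)
  have hN (t : ℚ) : ((b * (x₀ + t * b) - a * (y₀ - t * a) : ℚ) : ℝ) / ((a : ℝ) ^ 2 + (b : ℝ) ^ 2)
      = c + t := by
    have : (a : ℝ) ^ 2 + (b : ℝ) ^ 2 ≠ 0 := by positivity
    simp only [c]
    push_cast
    field_simp
    ring
  have hB (t : ℚ) : ((x₀ + t * b : ℚ) : ℚ_[p]) / (b : ℚ_[p]) = ((x₀ / b : ℚ) : ℚ_[p]) + t := by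
    push_cast
    field_simp
  obtain ⟨t, ⟨ht, htB, htN⟩, huniq⟩ :=
    existsUnique_mem_zInvP_norm_add_le_one_add_mem_Ico ((x₀ / b : ℚ) : ℚ_[p]) c
  refine ⟨(x₀ + t * b, y₀ - t * a), ⟨add_mem hx₀ (mul_mem ht hb),
    sub_mem hy₀ (mul_mem ht ha), by linear_combination h₀, by rwa [hN], by rwa [hB]⟩, ?_⟩
  rintro ⟨x, y⟩ ⟨hx, hy, h, hN', hB'⟩
  obtain ⟨t', ht', rfl, rfl⟩ :=
    Subring.exists_mem_eq_of_mul_add_mul_eq_one hb0 hx₀ hy₀ hx hy h₀ (by linear_combination h)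
  rw [hN] at hN'
  rw [hB] at hB'
  rw [huniq t' ⟨ht', hB', hN'⟩]
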